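/- (ISS bound of Theorem 1.) Let x : [0,∞) → ℝ^N be a differentiable curve and e : [0,∞) → ℝ^m a continuous curve satisfying x'(t) = A x(t) + B e(t) for all t ≥ 0, where A is an N×N real matrix and B an N×m real matrix. Suppose P and Q are symmetric positive definite N×N real matrices with Aᵀ P + P A = −Q, let λ_min(P), λ_max(P) be the smallest and largest eigenvalues of P and λ_min(Q) the smallest eigenvalue of Q, and suppose ‖e(t)‖ ≤ E for all t ≥ 0 for some constant E ≥ 0. Then for all t ≥ 0, ‖x(t)‖² ≤ (λ_max(P)/λ_min(P)) · exp( −λ_min(Q) t / (2 λ_max(P)) ) · ‖x(0)‖² + (4 λ_max(P) ‖Bᵀ Pᵀ P B‖ / (λ_min(P) λ_min(Q)²)) · E². In particular the system ẋ = A x + B e is input-to-state stable with respect to the measurement error e. -/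

import Mathlib

/-!
`V(x) = ⟪x, P x⟫` is an ISS-Lyapunov function. Along solutions the Lyapunov equation gives
`V' = -⟪x, Q x⟫ + 2 ⟪x, P B e⟫`, and Young's inequality `2 ⟪x, u⟫ ≤ (q/2) ‖x‖² + (2/q) ‖u‖²`
with `q = λ_min(Q)` absorbs the cross term, so `V' ≤ -α V + β` with `α = λ_min(Q) / (2 λ_max(P))`
and `β = 2 ‖BᵀPᵀPB‖ E² / λ_min(Q)`. Grönwall's inequality gives `V(t) ≤ e^{-α t} V(0) + β/α`,
and the Rayleigh bounds `λ_min(P) ‖x‖² ≤ V(x) ≤ λ_max(P) ‖x‖²` turn this into the bound on `‖x‖²`.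
-/

open Matrix
open scoped RealInnerProductSpace

/-- Multiplication of a vector in Euclidean space by a real matrix. -/
noncomputable def matVec {a b : ℕ} (M : Matrix (Fin a) (Fin b) ℝ)
    (v : EuclideanSpace ℝ (Fin b)) : EuclideanSpace ℝ (Fin a) :=
  Matrix.toEuclideanLin M v

/-- The operator norm of a real matrix, induced by the Euclidean norms. -/
noncomputable def opNorm {a b : ℕ} (M : Matrix (Fin a) (Fin b) ℝ) : ℝ :=
  ‖LinearMap.toContinuousLinearMap (Matrix.toEuclideanLin M)‖

open Real Set

section MatVec

variable {a b c : ℕ}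

lemma matVec_mul (M : Matrix (Fin a) (Fin b) ℝ) (M' : Matrix (Fin b) (Fin c) ℝ)
    (v : EuclideanSpace ℝ (Fin c)) : matVec (M * M') v = matVec M (matVec M' v) := by
  simp [matVec, toLpLin_apply, mulVec_mulVec]

lemma add_matVec (M M' : Matrix (Fin a) (Fin b) ℝ) (v : EuclideanSpace ℝ (Fin b)) :
    matVec (M + M') v = matVec M v + matVec M' v := by
  simp [matVec]

lemma neg_matVec (M : Matrix (Fin a) (Fin b) ℝ) (v : EuclideanSpace ℝ (Fin b)) :
    matVec (-M) v = -matVec M v := by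
  simp [matVec]

lemma matVec_add (M : Matrix (Fin a) (Fin b) ℝ) (v w : EuclideanSpace ℝ (Fin b)) :
    matVec M (v + w) = matVec M v + matVec M w :=
  map_add _ v w

lemma inner_matVec_left (M : Matrix (Fin a) (Fin b) ℝ) (v : EuclideanSpace ℝ (Fin b))
    (w : EuclideanSpace ℝ (Fin a)) : ⟪matVec M v, w⟫ = ⟪v, matVec Mᵀ w⟫ := by
  rw [matVec, matVec, ← conjTranspose_eq_transpose_of_trivial,
    toEuclideanLin_conjTranspose_eq_adjoint, LinearMap.adjoint_inner_right]

lemma inner_matVec_left_of_transpose_eq {M : Matrix (Fin a) (Fin a) ℝ} (hM : Mᵀ = M)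
    (v w : EuclideanSpace ℝ (Fin a)) : ⟪matVec M v, w⟫ = ⟪v, matVec M w⟫ := by
  rw [inner_matVec_left, hM]

lemma norm_matVec_le (M : Matrix (Fin a) (Fin b) ℝ) (v : EuclideanSpace ℝ (Fin b)) :
    ‖matVec M v‖ ≤ opNorm M * ‖v‖ :=
  (LinearMap.toContinuousLinearMap (Matrix.toEuclideanLin M)).le_opNorm v

lemma norm_matVec_sq_le (M : Matrix (Fin a) (Fin b) ℝ) (v : EuclideanSpace ℝ (Fin b)) :
    ‖matVec M v‖ ^ 2 ≤ opNorm (Mᵀ * M) * ‖v‖ ^ 2 :=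
  calc ‖matVec M v‖ ^ 2 = ⟪v, matVec (Mᵀ * M) v⟫ := by
        rw [← real_inner_self_eq_norm_sq, inner_matVec_left, matVec_mul]
    _ ≤ ‖v‖ * (opNorm (Mᵀ * M) * ‖v‖) :=
        (real_inner_le_norm _ _).trans (by gcongr; exact norm_matVec_le _ _)
    _ = opNorm (Mᵀ * M) * ‖v‖ ^ 2 := by ring

lemma norm_matVec_mul_sq_le (M : Matrix (Fin a) (Fin b) ℝ) (M' : Matrix (Fin b) (Fin c) ℝ)
    (v : EuclideanSpace ℝ (Fin c)) :
    ‖matVec (M * M') v‖ ^ 2 ≤ opNorm (M'ᵀ * Mᵀ * M * M') * ‖v‖ ^ 2 := by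
  simpa only [transpose_mul, Matrix.mul_assoc] using norm_matVec_sq_le (M * M') v

end MatVec

section Rayleigh

variable {n : ℕ} {S : Matrix (Fin n) (Fin n) ℝ}

lemma inner_matVec_self_eq_sum_eigenvalues (hS : S.IsHermitian) (v : EuclideanSpace ℝ (Fin n)) :
    ⟪v, matVec S v⟫ = ∑ i, hS.eigenvalues i * hS.eigenvectorBasis.repr v i ^ 2 := by
  set b := hS.eigenvectorBasis
  have hrepr : ∀ i, b.repr (matVec S v) i = hS.eigenvalues i * b.repr v i := by
    intro i
    have hb : matVec S (b i) = hS.eigenvalues i • b i := by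
      apply (WithLp.equiv 2 (Fin n → ℝ)).injective
      simpa [matVec] using hS.mulVec_eigenvectorBasis i
    rw [b.repr_apply_apply, b.repr_apply_apply,
      ← inner_matVec_left_of_transpose_eq (isHermitian_iff_isSymm.1 hS), hb, real_inner_smul_left]
  rw [← b.repr.inner_map_map, PiLp.inner_apply]
  refine Finset.sum_congr rfl fun i _ => ?_
  simp only [hrepr i, RCLike.inner_apply, ringHom_apply]
  ring

lemma norm_sq_eq_sum_eigenvectorBasis_repr (hS : S.IsHermitian) (v : EuclideanSpace ℝ (Fin n)) :
    ‖v‖ ^ 2 = ∑ i, hS.eigenvectorBasis.repr v i ^ 2 := by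
  rw [← hS.eigenvectorBasis.repr.norm_map, EuclideanSpace.norm_sq_eq]
  simp

lemma mul_norm_sq_le_inner_matVec_self (hS : S.IsHermitian) {c : ℝ}
    (hc : ∀ i, c ≤ hS.eigenvalues i) (v : EuclideanSpace ℝ (Fin n)) :
    c * ‖v‖ ^ 2 ≤ ⟪v, matVec S v⟫ := by
  rw [inner_matVec_self_eq_sum_eigenvalues hS, norm_sq_eq_sum_eigenvectorBasis_repr hS,
    Finset.mul_sum]
  exact Finset.sum_le_sum fun i _ => by gcongr; exact hc i

lemma inner_matVec_self_le_mul_norm_sq (hS : S.IsHermitian) {c : ℝ}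
    (hc : ∀ i, hS.eigenvalues i ≤ c) (v : EuclideanSpace ℝ (Fin n)) :
    ⟪v, matVec S v⟫ ≤ c * ‖v‖ ^ 2 := by
  rw [inner_matVec_self_eq_sum_eigenvalues hS, norm_sq_eq_sum_eigenvectorBasis_repr hS,
    Finset.mul_sum]
  exact Finset.sum_le_sum fun i _ => by gcongr; exact hc i

lemma Matrix.PosDef.pos_of_mem_range_eigenvalues (hS : S.PosDef) {c : ℝ}
    (hc : c ∈ range hS.1.eigenvalues) : 0 < c := by
  obtain ⟨i, rfl⟩ := hc
  exact hS.eigenvalues_pos i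

end Rayleigh

lemma hasDerivAt_inner_matVec_self {n : ℕ} {P : Matrix (Fin n) (Fin n) ℝ} (hP : Pᵀ = P)
    {x : ℝ → EuclideanSpace ℝ (Fin n)} {v : EuclideanSpace ℝ (Fin n)} {t : ℝ}
    (hx : HasDerivAt x v t) :
    HasDerivAt (fun s => ⟪x s, matVec P (x s)⟫) (2 * ⟪x t, matVec P v⟫) t := by
  have hPx : HasDerivAt (fun s => matVec P (x s)) (matVec P v) t :=
    (Matrix.toEuclideanLin P).toContinuousLinearMap.hasFDerivAt.comp_hasDerivAt t hx
  refine (hx.inner ℝ hPx).congr_deriv ?_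
  rw [real_inner_comm, inner_matVec_left_of_transpose_eq hP]
  ring

lemma two_inner_matVec_eq_of_lyapunov {n m : ℕ} {A P Q : Matrix (Fin n) (Fin n) ℝ}
    (B : Matrix (Fin n) (Fin m) ℝ) (hP : Pᵀ = P) (hLyap : Aᵀ * P + P * A = -Q)
    (v : EuclideanSpace ℝ (Fin n)) (w : EuclideanSpace ℝ (Fin m)) :
    2 * ⟪v, matVec P (matVec A v + matVec B w)⟫ = -⟪v, matVec Q v⟫ + 2 * ⟪v, matVec (P * B) w⟫ := by
  have hQ : ⟪v, matVec Q v⟫ = -(2 * ⟪v, matVec (P * A) v⟫) := by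
    rw [← neg_neg Q, ← hLyap, neg_matVec, inner_neg_right, add_matVec, inner_add_right,
      matVec_mul, ← inner_matVec_left, real_inner_comm (matVec P v),
      inner_matVec_left_of_transpose_eq hP, ← matVec_mul]
    ring
  rw [hQ, matVec_add, inner_add_right, matVec_mul, matVec_mul]
  ring

lemma hasDerivAt_inner_matVec_self_of_lyapunov {n m : ℕ} {A P Q : Matrix (Fin n) (Fin n) ℝ}
    {B : Matrix (Fin n) (Fin m) ℝ} (hP : Pᵀ = P) (hLyap : Aᵀ * P + P * A = -Q)
    {x : ℝ → EuclideanSpace ℝ (Fin n)} {w : EuclideanSpace ℝ (Fin m)} {t : ℝ}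
    (hx : HasDerivAt x (matVec A (x t) + matVec B w) t) :
    HasDerivAt (fun s => ⟪x s, matVec P (x s)⟫)
      (-⟪x t, matVec Q (x t)⟫ + 2 * ⟪x t, matVec (P * B) w⟫) t :=
  two_inner_matVec_eq_of_lyapunov B hP hLyap (x t) w ▸ hasDerivAt_inner_matVec_self hP hx

lemma two_inner_le_mul_norm_sq_add_div_mul_norm_sq {E : Type*} [NormedAddCommGroup E]
    [InnerProductSpace ℝ E] (v u : E) {q : ℝ} (hq : 0 < q) :
    2 * ⟪v, u⟫ ≤ q / 2 * ‖v‖ ^ 2 + 2 / q * ‖u‖ ^ 2 := by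
  have hsq : 0 ≤ (q * ‖v‖ - 2 * ‖u‖) ^ 2 / (2 * q) := by positivity
  have hid : q / 2 * ‖v‖ ^ 2 + 2 / q * ‖u‖ ^ 2 - 2 * (‖v‖ * ‖u‖)
      = (q * ‖v‖ - 2 * ‖u‖) ^ 2 / (2 * q) := by
    field_simp
    ring
  linarith [real_inner_le_norm v u]

lemma le_exp_mul_add_div_of_hasDerivAt_le {V V' : ℝ → ℝ} {α β : ℝ} (hα : 0 < α) (hβ : 0 ≤ β)
    (hV : ∀ t, 0 ≤ t → HasDerivAt V (V' t) t) (hV' : ∀ t, 0 ≤ t → V' t ≤ -α * V t + β)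
    {t : ℝ} (ht : 0 ≤ t) : V t ≤ exp (-α * t) * V 0 + β / α := by
  have hgron := le_gronwallBound_of_liminf_deriv_right_le (f := V) (δ := V 0) (a := 0) (b := t)
    (fun s hs => (hV s hs.1).continuousAt.continuousWithinAt)
    (fun s hs _ hr => (hV s hs.1).hasDerivWithinAt.liminf_right_slope_le hr) le_rfl
    (fun s hs => hV' s hs.1) t ⟨ht, le_rfl⟩
  rw [sub_zero, gronwallBound_of_K_ne_0 (neg_ne_zero.2 hα.ne')] at hgron
  have : 0 ≤ β / α * exp (-α * t) := by positivity
  calc V t ≤ V 0 * exp (-α * t) + β / -α * (exp (-α * t) - 1) := hgron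
    _ ≤ exp (-α * t) * V 0 + β / α := by rw [div_neg]; linarith

lemma neg_add_two_inner_le_of_norm_sq_bounds {E : Type*} [NormedAddCommGroup E]
    [InnerProductSpace ℝ E] {v u : E} {a b q p K : ℝ} (hq : 0 < q) (hp : 0 < p)
    (ha : q * ‖v‖ ^ 2 ≤ a) (hb : b ≤ p * ‖v‖ ^ 2) (hu : ‖u‖ ^ 2 ≤ K) :
    -a + 2 * ⟪v, u⟫ ≤ -(q / (2 * p)) * b + 2 * K / q := by
  have hyoung := two_inner_le_mul_norm_sq_add_div_mul_norm_sq v u hq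
  have hb' : q / (2 * p) * b ≤ q / 2 * ‖v‖ ^ 2 :=
    calc q / (2 * p) * b ≤ q / (2 * p) * (p * ‖v‖ ^ 2) := by gcongr
      _ = q / 2 * ‖v‖ ^ 2 := by field_simp
  have hu' : 2 / q * ‖u‖ ^ 2 ≤ 2 * K / q :=
    calc 2 / q * ‖u‖ ^ 2 ≤ 2 / q * K := by gcongr
      _ = 2 * K / q := by ring
  linarith

theorem event_triggered_iss_bound_general {N m : ℕ}
    (A P Q : Matrix (Fin N) (Fin N) ℝ) (B : Matrix (Fin N) (Fin m) ℝ)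
    (hP : P.PosDef) (hQ : Q.PosDef)
    (hLyap : Aᵀ * P + P * A = -Q)
    (lamQ : ℝ) (hlamQ : IsLeast (Set.range hQ.1.eigenvalues) lamQ)
    (lamPmin : ℝ) (hlamPmin : IsLeast (Set.range hP.1.eigenvalues) lamPmin)
    (lamPmax : ℝ) (hlamPmax : IsGreatest (Set.range hP.1.eigenvalues) lamPmax)
    (x : ℝ → EuclideanSpace ℝ (Fin N)) (e : ℝ → EuclideanSpace ℝ (Fin m))
    (hx : ∀ t, 0 ≤ t → HasDerivAt x (matVec A (x t) + matVec B (e t)) t)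
    (E : ℝ) (heE : ∀ t, 0 ≤ t → ‖e t‖ ≤ E) :
    ∀ t, 0 ≤ t →
      ‖x t‖ ^ 2 ≤ (lamPmax / lamPmin) * Real.exp (-lamQ * t / (2 * lamPmax)) * ‖x 0‖ ^ 2 +
        (4 * lamPmax * opNorm (Bᵀ * Pᵀ * P * B) / (lamPmin * lamQ ^ 2)) * E ^ 2 := by
  intro t ht
  have hQ0 := hQ.pos_of_mem_range_eigenvalues hlamQ.1
  have hPmin0 := hP.pos_of_mem_range_eigenvalues hlamPmin.1
  have hPmax0 := hP.pos_of_mem_range_eigenvalues hlamPmax.1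
  have hPT : Pᵀ = P := isHermitian_iff_isSymm.1 hP.1
  set c := opNorm (Bᵀ * Pᵀ * P * B)
  have hc : 0 ≤ c := norm_nonneg _
  have hdecay := le_exp_mul_add_div_of_hasDerivAt_le (V := fun s => ⟪x s, matVec P (x s)⟫)
    (by positivity : 0 < lamQ / (2 * lamPmax)) (by positivity : 0 ≤ 2 * (c * E ^ 2) / lamQ)
    (fun s hs => hasDerivAt_inner_matVec_self_of_lyapunov hPT hLyap (hx s hs))
    (fun s hs => neg_add_two_inner_le_of_norm_sq_bounds hQ0 hPmax0
      (mul_norm_sq_le_inner_matVec_self hQ.1 (fun i => hlamQ.2 (mem_range_self i)) (x s))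
      (inner_matVec_self_le_mul_norm_sq hP.1 (fun i => hlamPmax.2 (mem_range_self i)) (x s))
      ((norm_matVec_mul_sq_le P B (e s)).trans (by gcongr; exact heE s hs))) ht
  have hlow := mul_norm_sq_le_inner_matVec_self hP.1 (fun i => hlamPmin.2 (mem_range_self i)) (x t)
  have hup := inner_matVec_self_le_mul_norm_sq hP.1 (fun i => hlamPmax.2 (mem_range_self i)) (x 0)
  rw [← mul_le_mul_iff_right₀ hPmin0]
  calc lamPmin * ‖x t‖ ^ 2
      ≤ exp (-(lamQ / (2 * lamPmax)) * t) * (lamPmax * ‖x 0‖ ^ 2)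
        + 2 * (c * E ^ 2) / lamQ / (lamQ / (2 * lamPmax)) := hlow.trans (hdecay.trans (by gcongr))
    _ = _ := by field_simp; ring

/-- ISS bound of Theorem 1: if `x' = A x + B e` with `Aᵀ P + P A = -Q`, `P, Q ≻ 0`,
and `‖e(t)‖ ≤ E` for all `t ≥ 0`, then
`‖x(t)‖² ≤ (λ_max(P)/λ_min(P)) exp(-λ_min(Q) t/(2 λ_max(P))) ‖x(0)‖²
  + (4 λ_max(P) ‖BᵀPᵀPB‖/(λ_min(P) λ_min(Q)²)) E²`,
i.e. the system is input-to-state stable with respect to `e`. -/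
theorem event_triggered_iss_bound {N m : ℕ}
    (A P Q : Matrix (Fin N) (Fin N) ℝ) (B : Matrix (Fin N) (Fin m) ℝ)
    (hP : P.PosDef) (hQ : Q.PosDef)
    (hLyap : Aᵀ * P + P * A = -Q)
    (lamQ : ℝ) (hlamQ : IsLeast (Set.range hQ.1.eigenvalues) lamQ)
    (lamPmin : ℝ) (hlamPmin : IsLeast (Set.range hP.1.eigenvalues) lamPmin)
    (lamPmax : ℝ) (hlamPmax : IsGreatest (Set.range hP.1.eigenvalues) lamPmax)
    (x : ℝ → EuclideanSpace ℝ (Fin N)) (e : ℝ → EuclideanSpace ℝ (Fin m))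
    (he : Continuous e)
    (hx : ∀ t, 0 ≤ t → HasDerivAt x (matVec A (x t) + matVec B (e t)) t)
    (E : ℝ) (hE : 0 ≤ E) (heE : ∀ t, 0 ≤ t → ‖e t‖ ≤ E) :
    ∀ t, 0 ≤ t →
      ‖x t‖ ^ 2 ≤ (lamPmax / lamPmin) * Real.exp (-lamQ * t / (2 * lamPmax)) * ‖x 0‖ ^ 2 +
        (4 * lamPmax * opNorm (Bᵀ * Pᵀ * P * B) / (lamPmin * lamQ ^ 2)) * E ^ 2 :=
  event_triggered_iss_bound_general A P Q B hP hQ hLyap lamQ hlamQ lamPmin hlamPmin lamPmax hlamPmax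
    x e hx E heE
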